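/- Let R be a commutative ring, {M_i, φ_{i,j} | i, j ∈ Γ} a direct system of R-modules over a directed index set Γ, and for each i let ψ_i : M_i → L_i be an ℒ-envelope of M_i with the unique mapping property, so that the L_i form a direct system with transition maps induced by the unique mapping property and the ψ_i give a morphism of direct systems. Then the induced map lim→ M_i → lim→ L_i is an ℒ-envelope of lim→ M_i; in particular, the Lucas envelope of lim→ M_i is isomorphic to lim→ L_i. -/

import Mathlib

open CategoryTheory

universe u

/-- An ideal is dense if its annihilator in `R` is zero. -/
def Ideal.IsDense {R : Type u} [CommRing R] (I : Ideal R) : Prop :=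
  ∀ r : R, (∀ a ∈ I, a * r = 0) → r = 0

/-- An ideal is semi-regular if it contains a finitely generated dense subideal. -/
def Ideal.IsSemiRegular {R : Type u} [CommRing R] (I : Ideal R) : Prop :=
  ∃ J : Ideal R, J ≤ I ∧ J.FG ∧ J.IsDense

/-- Membership in `𝒬`: finitely generated semi-regular ideals. -/
def Ideal.IsInQ {R : Type u} [CommRing R] (I : Ideal R) : Prop :=
  I.FG ∧ I.IsSemiRegular

/-- An `R`-module is `𝒬`-torsion if every element is annihilated by some `I ∈ 𝒬`. -/
def IsQTorsion (R : Type u) [CommRing R] (M : Type u) [AddCommGroup M] [Module R M] : Prop :=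
  ∀ x : M, ∃ I : Ideal R, I.IsInQ ∧ ∀ a ∈ I, a • x = 0

/-- An `R`-module is `𝒬`-torsion-free if no nonzero element is annihilated by any `I ∈ 𝒬`. -/
def IsQTorsionFree (R : Type u) [CommRing R] (M : Type u) [AddCommGroup M] [Module R M] : Prop :=
  ∀ x : M, (∃ I : Ideal R, I.IsInQ ∧ ∀ a ∈ I, a • x = 0) → x = 0

/-- `Ext¹_R(A, B) = 0`. -/
def Ext1Vanishes (R : Type u) [CommRing R] (A B : Type u) [AddCommGroup A] [Module R A]
    [AddCommGroup B] [Module R B] : Prop :=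
  Subsingleton (((Ext R (ModuleCat.{u} R) 1).obj (Opposite.op (ModuleCat.of R A))).obj
    (ModuleCat.of R B))

/-- A Lucas module is a `𝒬`-torsion-free module `M` with `Ext¹_R(R/I, M) = 0` for all `I ∈ 𝒬`. -/
def IsLucasModule (R : Type u) [CommRing R] (M : Type u) [AddCommGroup M] [Module R M] : Prop :=
  IsQTorsionFree R M ∧ ∀ I : Ideal R, I.IsInQ → Ext1Vanishes R (R ⧸ I) M

/-!
The envelope part is formal: by the universal property of the direct limit, the unique mapping
properties of the `ψᵢ` glue to a unique mapping property of `lim ψᵢ` with respect to every Lucas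
module. This gives the preenvelope property, and it forces every endomorphism `h` of `lim Lᵢ`
with `h ∘ lim ψᵢ = lim ψᵢ` to be the identity, once `lim Lᵢ` is known to be Lucas.

That `lim Lᵢ` is Lucas uses finite generation. Comparing a projective resolution of `R/I` with
the presentation `0 → I → R → R/I → 0` shows that `Ext¹(R/I, N) = 0` exactly when every map
`I → N` is multiplication by an element of `N`. Given `f : I → lim Lᵢ`, choose
a dense ideal `J = (s) ⊆ I` with `s` finite. The finitely many values `f b` for `b ∈ s`, together
with the relations `b' • f b = b • f b'`, are already realised in some `Lⱼ`. Because `Lⱼ` is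
torsion-free, they define a map `J → Lⱼ`, which is multiplication by some `w`. The image of `w`
then works for `f`, since `J` kills every `f a - a • w`.
-/

section LinearAlgebra

variable {R : Type*} [CommRing R]

lemma LinearMap.surjective_comp_rangeSubtype_iff {P₁ P₀ N : Type*} [AddCommGroup P₁]
    [Module R P₁] [AddCommGroup P₀] [Module R P₀] [AddCommGroup N] [Module R N]
    (d : P₁ →ₗ[R] P₀) :
    Function.Surjective (fun g : P₀ →ₗ[R] N => g ∘ₗ (LinearMap.range d).subtype) ↔
      ∀ f : P₁ →ₗ[R] N, LinearMap.ker d ≤ LinearMap.ker f → ∃ g : P₀ →ₗ[R] N, g ∘ₗ d = f := by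
  constructor
  · intro h f hf
    obtain ⟨g, hg⟩ := h ((LinearMap.ker d).liftQ f hf ∘ₗ d.quotKerEquivRange.symm.toLinearMap)
    refine ⟨g, LinearMap.ext fun x => ?_⟩
    simpa using LinearMap.congr_fun hg ⟨d x, LinearMap.mem_range_self d x⟩
  · intro h f
    have hker : LinearMap.ker d ≤ LinearMap.ker (f ∘ₗ d.rangeRestrict) := by
      rw [← LinearMap.ker_rangeRestrict]; exact LinearMap.ker_le_ker_comp _ _
    obtain ⟨g, hg⟩ := h _ hker
    exact ⟨g, LinearMap.ext fun ⟨_, x, rfl⟩ => LinearMap.congr_fun hg x⟩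

lemma surjective_comp_kerSubtype_of_projective {P Q A N : Type*}
    [AddCommGroup P] [Module R P] [AddCommGroup Q] [Module R Q]
    [AddCommGroup A] [Module R A] [AddCommGroup N] [Module R N]
    [Module.Projective R P] [Module.Projective R Q]
    {p : P →ₗ[R] A} {q : Q →ₗ[R] A} (hp : Function.Surjective p) (hq : Function.Surjective q)
    (h : Function.Surjective fun g : Q →ₗ[R] N => g ∘ₗ (LinearMap.ker q).subtype) :
    Function.Surjective fun g : P →ₗ[R] N => g ∘ₗ (LinearMap.ker p).subtype := by
  obtain ⟨t, ht⟩ := Module.projective_lifting_property q p hq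
  obtain ⟨r, hr⟩ := Module.projective_lifting_property p q hp
  have htr : ∀ x, p (x - r (t x)) = 0 := fun x => by
    rw [map_sub, ← LinearMap.comp_apply p r, hr, ← LinearMap.comp_apply q t, ht, sub_self]
  have hr_ker : ∀ y ∈ LinearMap.ker q, r y ∈ LinearMap.ker p := fun y hy => by
    rw [LinearMap.mem_ker, ← LinearMap.comp_apply, hr]; exact hy
  have ht_ker : ∀ x ∈ LinearMap.ker p, t x ∈ LinearMap.ker q := fun x hx => by
    rw [LinearMap.mem_ker, ← LinearMap.comp_apply, ht]; exact hx
  intro f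
  obtain ⟨G, hG⟩ := h (f ∘ₗ r.restrict hr_ker)
  -- `x = (x - r (t x)) + r (t x)` splits `P` into `ker p` and the image of `Q`
  refine ⟨f ∘ₗ (LinearMap.id - r ∘ₗ t).codRestrict _ htr + G ∘ₗ t,
    LinearMap.ext fun ⟨x, hx⟩ => ?_⟩
  have hGt : G (t x) = f ⟨r (t x), hr_ker _ (ht_ker x hx)⟩ :=
    LinearMap.congr_fun hG ⟨t x, ht_ker x hx⟩
  simp only [LinearMap.comp_apply, LinearMap.add_apply, Submodule.subtype_apply, hGt, ← map_add]
  exact congrArg f (Subtype.ext (sub_add_cancel x (r (t x))))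

lemma surjective_comp_kerSubtype_iff_of_projective {P Q A N : Type*}
    [AddCommGroup P] [Module R P] [AddCommGroup Q] [Module R Q]
    [AddCommGroup A] [Module R A] [AddCommGroup N] [Module R N]
    [Module.Projective R P] [Module.Projective R Q]
    {p : P →ₗ[R] A} {q : Q →ₗ[R] A} (hp : Function.Surjective p) (hq : Function.Surjective q) :
    (Function.Surjective fun g : P →ₗ[R] N => g ∘ₗ (LinearMap.ker p).subtype) ↔
      Function.Surjective fun g : Q →ₗ[R] N => g ∘ₗ (LinearMap.ker q).subtype :=
  ⟨surjective_comp_kerSubtype_of_projective hq hp, surjective_comp_kerSubtype_of_projective hp hq⟩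

lemma exists_linearMap_span_of_smul_comm {N : Type*} [AddCommGroup N] [Module R N] {s : Set R}
    (hN : ∀ x : N, (∀ b ∈ s, b • x = 0) → x = 0) (z : s → N)
    (hz : ∀ b b' : s, (b' : R) • z b = (b : R) • z b') :
    ∃ g : Ideal.span s →ₗ[R] N, ∀ b : s, g ⟨b, Ideal.subset_span b.2⟩ = z b := by
  have hrange : LinearMap.range (Finsupp.linearCombination R ((↑) : s → R)) = Ideal.span s := by
    rw [Finsupp.range_linearCombination, Subtype.range_coe]
  let S : (s →₀ R) →ₗ[R] Ideal.span s := (Finsupp.linearCombination R (↑)).codRestrict _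
    fun c => hrange ▸ LinearMap.mem_range_self _ c
  let T : (s →₀ R) →ₗ[R] N := Finsupp.linearCombination R z
  have hS : Function.Surjective S := by
    rintro ⟨a, ha⟩
    rw [← hrange] at ha
    obtain ⟨c, rfl⟩ := ha
    exact ⟨c, rfl⟩
  have hST : ∀ c (b : s), (b : R) • T c = (S c : R) • z b := fun c b => by
    simp only [S, T, LinearMap.codRestrict_apply, Finsupp.linearCombination_apply, Finsupp.sum,
      Finset.smul_sum, Finset.sum_smul]
    refine Finset.sum_congr rfl fun b' _ => ?_
    rw [smul_comm, hz b' b, smul_assoc]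
  have hker : LinearMap.ker S ≤ LinearMap.ker T := fun c hc =>
    hN _ fun b hb => by rw [hST c ⟨b, hb⟩, LinearMap.mem_ker.1 hc, Submodule.coe_zero, zero_smul]
  refine ⟨(LinearMap.ker S).liftQ T hker ∘ₗ (S.quotKerEquivOfSurjective hS).symm.toLinearMap,
    fun b => ?_⟩
  have hSb : S (Finsupp.single b 1) = ⟨b, Ideal.subset_span b.2⟩ := by ext; simp [S]
  simp [← hSb, T]

end LinearAlgebra

namespace CategoryTheory.ProjectiveResolution

variable {R : Type u} [CommRing R] {X : ModuleCat.{u} R} (N : ModuleCat.{u} R)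
  (P : ProjectiveResolution X)

lemma subsingleton_ext_one_iff :
    Subsingleton (((Ext R (ModuleCat.{u} R) 1).obj (Opposite.op X)).obj N) ↔
      ∀ f : P.complex.X 1 ⟶ N, P.complex.d 2 1 ≫ f = 0 →
        ∃ g : P.complex.X 0 ⟶ N, P.complex.d 1 0 ≫ g = f := by
  rw [← ModuleCat.isZero_iff_subsingleton, (P.isoExt 1 N).isZero_iff,
    ← HomologicalComplex.exactAt_iff_isZero_homology,
    (P.complex.linearYonedaObj R N).exactAt_iff' 0 1 2 (by simp) (by simp),
    ShortComplex.moduleCat_exact_iff]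
  rfl

lemma subsingleton_ext_one_iff_surjective :
    Subsingleton (((Ext R (ModuleCat.{u} R) 1).obj (Opposite.op X)).obj N) ↔
      Function.Surjective fun g : P.complex.X 0 →ₗ[R] N =>
        g ∘ₗ (LinearMap.ker (P.π.f 0 ≫
          (HomologicalComplex.singleObjXSelf (ComplexShape.down ℕ) 0 X).hom).hom).subtype := by
  have hrange₀ : LinearMap.range (P.complex.d 1 0).hom = LinearMap.ker
      (P.π.f 0 ≫ (HomologicalComplex.singleObjXSelf (ComplexShape.down ℕ) 0 X).hom).hom :=
    (ShortComplex.moduleCat_exact_iff_range_eq_ker _).1 P.exact₀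
  have hrange₁ : LinearMap.range (P.complex.d 2 1).hom = LinearMap.ker (P.complex.d 1 0).hom :=
    (ShortComplex.moduleCat_exact_iff_range_eq_ker _).1 (P.exact_succ 0)
  rw [subsingleton_ext_one_iff N P, ← hrange₀, LinearMap.surjective_comp_rangeSubtype_iff]
  constructor
  · intro h f hf
    obtain ⟨g, hg⟩ := h (ModuleCat.ofHom f) (by
      ext x
      exact hf (hrange₁ ▸ LinearMap.mem_range_self _ x))
    exact ⟨g.hom, congrArg ModuleCat.Hom.hom hg⟩
  · intro h f hf
    obtain ⟨g, hg⟩ := h f.hom (by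
      rw [← hrange₁, LinearMap.range_le_ker_iff]
      exact congrArg ModuleCat.Hom.hom hf)
    exact ⟨ModuleCat.ofHom g, ModuleCat.hom_ext hg⟩

end CategoryTheory.ProjectiveResolution

lemma ext1Vanishes_iff_forall_exists_smul {R : Type u} [CommRing R] (I : Ideal R) (N : Type u)
    [AddCommGroup N] [Module R N] :
    Ext1Vanishes R (R ⧸ I) N ↔ ∀ f : I →ₗ[R] N, ∃ y : N, ∀ a : I, f a = (a : R) • y := by
  let P := CategoryTheory.ProjectiveResolution.of (ModuleCat.of R (R ⧸ I))
  have hπ : Function.Surjective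
      (P.π.f 0 ≫ (HomologicalComplex.singleObjXSelf (ComplexShape.down ℕ) 0 _).hom).hom :=
    (ModuleCat.epi_iff_surjective _).1 inferInstance
  rw [Ext1Vanishes, P.subsingleton_ext_one_iff_surjective,
    surjective_comp_kerSubtype_iff_of_projective hπ I.mkQ_surjective, Submodule.ker_mkQ]
  constructor
  · intro h f
    obtain ⟨g, rfl⟩ := h f
    exact ⟨g 1, fun a => by simp [← map_smul]⟩
  · intro h f
    obtain ⟨y, hy⟩ := h f
    exact ⟨LinearMap.toSpanSingleton R N y, LinearMap.ext fun a => (hy a).symm⟩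

lemma IsQTorsionFree.eq_zero_of_forall_smul_eq_zero {R : Type u} [CommRing R] {N : Type u}
    [AddCommGroup N] [Module R N] (hN : IsQTorsionFree R N) {s : Set R}
    (hs : (Ideal.span s).IsInQ) {x : N} (hx : ∀ b ∈ s, b • x = 0) : x = 0 :=
  hN x ⟨_, hs, fun _ ha =>
    (Submodule.span_le (p := LinearMap.ker (LinearMap.toSpanSingleton R N x))).2 hx ha⟩

namespace Module.DirectLimit

variable {R : Type*} [Semiring R] {Γ : Type*} [Preorder Γ] [DecidableEq Γ]
  {G : Γ → Type*} [∀ i, AddCommMonoid (G i)] [∀ i, Module R (G i)]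
  {f : ∀ i j, i ≤ j → G i →ₗ[R] G j}

lemma exists_of_finite [IsDirectedOrder Γ] [Nonempty Γ] {ι : Type*} [Finite ι]
    (z : ι → DirectLimit G f) : ∃ i, ∃ y : ι → G i, ∀ b, of R Γ G f i (y b) = z b := by
  choose j y hy using fun b => exists_of (z b)
  obtain ⟨i, hi⟩ := (Set.finite_range j).bddAbove
  exact ⟨i, fun b => f (j b) i (hi ⟨b, rfl⟩) (y b), fun b => by rw [of_f, hy]⟩

lemma exists_forall_map_eq_zero [IsDirectedOrder Γ] [DirectedSystem G (f · · ·)] {ι : Type*}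
    [Finite ι] {i : Γ} (y : ι → G i) (hy : ∀ b, of R Γ G f i (y b) = 0) :
    ∃ j, ∃ hij : i ≤ j, ∀ b, f i j hij (y b) = 0 := by
  have : Nonempty Γ := ⟨i⟩
  choose j hij hj using fun b => of.zero_exact (hy b)
  obtain ⟨k, hk⟩ := (Set.finite_range j).bddAbove
  obtain ⟨m, him, hkm⟩ := exists_ge_ge i k
  refine ⟨m, him, fun b => ?_⟩
  rw [← DirectedSystem.map_map (f := (f · · ·)) (hij b) ((hk ⟨b, rfl⟩).trans hkm), hj, map_zero]

lemma existsUnique_comp_map {G' : Γ → Type*} [∀ i, AddCommMonoid (G' i)] [∀ i, Module R (G' i)]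
    {f' : ∀ i j, i ≤ j → G' i →ₗ[R] G' j} {P : Type*} [AddCommMonoid P] [Module R P]
    (ψ : ∀ i, G i →ₗ[R] G' i) (hψ : ∀ i j h, ψ j ∘ₗ f i j h = f' i j h ∘ₗ ψ i)
    (hP : ∀ i (g : G i →ₗ[R] P), ∃! h : G' i →ₗ[R] P, h ∘ₗ ψ i = g)
    (g : DirectLimit G f →ₗ[R] P) :
    ∃! h : DirectLimit G' f' →ₗ[R] P, h ∘ₗ map ψ hψ = g := by
  choose h hh huniq using fun i => hP i (g ∘ₗ of R Γ G f i)
  have hcompat : ∀ i j hij, h j ∘ₗ f' i j hij = h i := fun i j hij =>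
    huniq i _ <| LinearMap.ext fun x => by
      simpa [← LinearMap.comp_apply (f' i j hij), ← hψ] using
        LinearMap.congr_fun (hh j) (f i j hij x)
  refine ⟨lift R Γ G' f' h fun i j hij => LinearMap.congr_fun (hcompat i j hij),
    hom_ext fun i => ?_, fun k hk => hom_ext fun i => ?_⟩
  · ext x
    simpa using LinearMap.congr_fun (hh i) x
  · have hki : k ∘ₗ of R Γ G' f' i = h i := huniq i _ <|
      LinearMap.ext fun x => by simp [← hk]
    exact hki.trans (LinearMap.ext fun x => by simp)

end Module.DirectLimit

lemma Module.DirectLimit.exists_of_finite_of_smul_comm {R : Type*} [Ring R] {Γ : Type*}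
    [Preorder Γ] [IsDirectedOrder Γ] [Nonempty Γ] [DecidableEq Γ] {G : Γ → Type*}
    [∀ i, AddCommGroup (G i)] [∀ i, Module R (G i)] {f : ∀ i j, i ≤ j → G i →ₗ[R] G j}
    [DirectedSystem G (f · · ·)] {ι : Type*} [Finite ι] (z : ι → DirectLimit G f)
    (c : ι → R) (hz : ∀ b b', c b' • z b = c b • z b') :
    ∃ j, ∃ y : ι → G j, (∀ b, of R Γ G f j (y b) = z b) ∧ ∀ b b', c b' • y b = c b • y b' := by
  obtain ⟨i, y, hy⟩ := exists_of_finite z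
  obtain ⟨j, hij, hj⟩ := exists_forall_map_eq_zero (f := f)
    (fun p : ι × ι => c p.2 • y p.1 - c p.1 • y p.2) (fun p => by
      rw [map_sub, map_smul, map_smul, hy, hy, hz, sub_self])
  refine ⟨j, fun b => f i j hij (y b), fun b => by rw [of_f, hy], fun b b' => ?_⟩
  rw [← map_smul, ← map_smul, ← sub_eq_zero, ← map_sub]
  exact hj (b, b')

section DirectLimit

open Module.DirectLimit

variable {R : Type u} [CommRing R] {Γ : Type u} [Preorder Γ] [IsDirectedOrder Γ] [DecidableEq Γ]
  {L : Γ → Type u} [∀ i, AddCommGroup (L i)] [∀ i, Module R (L i)]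
  {φ : ∀ i j, i ≤ j → L i →ₗ[R] L j} [DirectedSystem L (φ · · ·)]

lemma isQTorsionFree_directLimit (hL : ∀ i, IsQTorsionFree R (L i)) :
    IsQTorsionFree R (Module.DirectLimit L φ) := by
  rintro x ⟨I, hI, hx⟩
  cases isEmpty_or_nonempty Γ
  · exact Subsingleton.elim _ _
  obtain ⟨i, x, rfl⟩ := exists_of x
  obtain ⟨s, rfl⟩ := hI.1
  obtain ⟨j, hij, hj⟩ := exists_forall_map_eq_zero (f := φ) (fun b : s => (b : R) • x)
    fun b => by rw [map_smul]; exact hx _ (Submodule.subset_span b.2)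
  rw [← of_f (hij := hij), (hL j).eq_zero_of_forall_smul_eq_zero (x := φ i j hij x) hI
    fun b hb => by rw [← map_smul]; exact hj ⟨b, hb⟩, map_zero]

lemma ext1Vanishes_directLimit (hL : ∀ i, IsLucasModule R (L i)) {I : Ideal R}
    (hI : I.IsInQ) : Ext1Vanishes R (R ⧸ I) (Module.DirectLimit L φ) := by
  rw [ext1Vanishes_iff_forall_exists_smul]
  intro F
  cases isEmpty_or_nonempty Γ
  · exact ⟨0, fun _ => Subsingleton.elim _ _⟩
  obtain ⟨J, hJI, ⟨s, rfl⟩, hJ⟩ := hI.2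
  have hJQ : (Ideal.span (s : Set R)).IsInQ := ⟨⟨s, rfl⟩, _, le_rfl, ⟨s, rfl⟩, hJ⟩
  have hF : ∀ a b : I, (a : R) • F b = (b : R) • F a := fun a b => by
    rw [← map_smul, ← map_smul]; congr 1; ext; exact mul_comm _ _
  obtain ⟨j, z, hz, hrel⟩ := exists_of_finite_of_smul_comm
    (fun b : (s : Set R) => F ⟨b, hJI (Ideal.subset_span b.2)⟩) (↑) fun b b' => hF ⟨b', _⟩ ⟨b, _⟩
  obtain ⟨g, hg⟩ := exists_linearMap_span_of_smul_comm
    (fun _ => (hL j).1.eq_zero_of_forall_smul_eq_zero hJQ) z hrel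
  obtain ⟨w, hw⟩ := (ext1Vanishes_iff_forall_exists_smul _ _).1 ((hL j).2 _ hJQ) g
  refine ⟨of R Γ L φ j w, fun a => sub_eq_zero.1 <|
    (isQTorsionFree_directLimit fun i => (hL i).1).eq_zero_of_forall_smul_eq_zero hJQ
      fun b hb => ?_⟩
  have hbw : b • of R Γ L φ j w = F ⟨b, hJI (Ideal.subset_span hb)⟩ := by
    rw [← map_smul, ← hw ⟨b, Ideal.subset_span hb⟩, hg ⟨b, hb⟩, hz]
  rw [smul_sub, smul_comm b, hbw, hF a, sub_self]

lemma isLucasModule_directLimit (hL : ∀ i, IsLucasModule R (L i)) :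
    IsLucasModule R (Module.DirectLimit L φ) :=
  ⟨isQTorsionFree_directLimit fun i => (hL i).1, fun _ hI => ext1Vanishes_directLimit hL hI⟩

end DirectLimit

/-- If `{Mᵢ}` is a direct system over a directed index set and each
`ψᵢ : Mᵢ → Lᵢ` is an `ℒ`-envelope with the unique mapping property (`ℒ` the class of
Lucas modules), the `Lᵢ` forming a direct system compatible with the `ψᵢ`, then the
induced map `lim→ Mᵢ → lim→ Lᵢ` is an `ℒ`-envelope of `lim→ Mᵢ`. -/
theorem directLimit_of_envelopes_is_envelope (R : Type u) [CommRing R]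
    (Γ : Type u) [Preorder Γ] [IsDirected Γ (· ≤ ·)] [DecidableEq Γ]
    (M : Γ → Type u) [∀ i, AddCommGroup (M i)] [∀ i, Module R (M i)]
    (φM : ∀ i j : Γ, i ≤ j → (M i →ₗ[R] M j))
    (L : Γ → Type u) [∀ i, AddCommGroup (L i)] [∀ i, Module R (L i)]
    (φL : ∀ i j : Γ, i ≤ j → (L i →ₗ[R] L j))
    [DirectedSystem L (fun i j h => φL i j h)]
    (ψ : ∀ i, M i →ₗ[R] L i)
    -- the `ψᵢ` form a morphism of direct systems (the transition maps of `{Lᵢ}` being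
    -- the ones induced by the unique mapping property)
    (hcompat : ∀ (i j : Γ) (h : i ≤ j) (x : M i), ψ j (φM i j h x) = φL i j h (ψ i x))
    -- each `ψᵢ : Mᵢ → Lᵢ` is an `ℒ`-envelope with the unique mapping property
    (hLucas : ∀ i, IsLucasModule R (L i))
    (hump : ∀ i, ∀ F' : ModuleCat.{u} R, IsLucasModule R F' → ∀ f' : M i →ₗ[R] F',
      ∃! g : L i →ₗ[R] F', g.comp (ψ i) = f') :
    -- conclusion: the induced map `Φ : lim→ Mᵢ → lim→ Lᵢ` is an `ℒ`-envelope
    letI Φ : Module.DirectLimit M φM →ₗ[R] Module.DirectLimit L φL :=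
      Module.DirectLimit.lift R Γ M φM
        (fun i => (Module.DirectLimit.of R Γ L φL i).comp (ψ i))
        (fun i j hij x => by simp [hcompat i j hij x])
    IsLucasModule R (Module.DirectLimit L φL) ∧
    (∀ F' : ModuleCat.{u} R, IsLucasModule R F' →
      Function.Surjective
        (fun h : Module.DirectLimit L φL →ₗ[R] F' => h.comp Φ)) ∧
    (∀ h : Module.DirectLimit L φL →ₗ[R] Module.DirectLimit L φL,
      h.comp Φ = Φ → Function.Bijective h) := by
  have hψ : ∀ i j h, ψ j ∘ₗ φM i j h = φL i j h ∘ₗ ψ i := fun i j h =>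
    LinearMap.ext (hcompat i j h)
  have hlim := isLucasModule_directLimit (φ := φL) hLucas
  -- `Module.DirectLimit.map ψ hψ` unfolds to the map `Φ` of the statement
  have huniq (F : ModuleCat.{u} R) (hF : IsLucasModule R F) :=
    Module.DirectLimit.existsUnique_comp_map ψ hψ fun i => hump i F hF
  refine ⟨hlim, fun F hF f => (huniq F hF f).exists, fun h hh => ?_⟩
  obtain rfl : h = LinearMap.id :=
    (huniq (ModuleCat.of R (Module.DirectLimit L φL)) hlim (Module.DirectLimit.map ψ hψ)).unique
      hh (LinearMap.id_comp _)
  exact Function.bijective_id
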